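/- arXiv:2305.15163 — 4 statements merged into one kernel-verified Lean document; each statement's English description precedes it below -/
import Mathlib

section
/- Fix a port index j shared by two subdomains i and ℓ. For subdomain i, let Q(i) be a finite index set of ports with j ∈ Q(i), and for each k ∈ Q(i) let P_i^k ∈ ℝ^{N_k^p × N_i^Γ} satisfy P_i^k (P_i^k)ᵀ = I and P_i^k (P_i^m)ᵀ = 0 for k ≠ m in Q(i); let P̂_i^k ∈ ℝ^{n_k^p × n_i^Γ} be arbitrary matrices, let g_k^p : ℝ^{n_k^p} → ℝ^{N_k^p} be arbitrary functions, and define the interface decoder g_i^Γ(x̂) = Σ_{k ∈ Q(i)} (P_i^k)ᵀ g_k^p(P̂_i^k x̂). Make the analogous assumptions and definitions for subdomain ℓ, using the same port function g_j^p for the shared port j. Then: (i) for every x̂ ∈ ℝ^{n_i^Γ} and every k ∈ Q(i), P_i^k g_i^Γ(x̂) = g_k^p(P̂_i^k x̂); and (ii) if the ROM port compatibility condition P̂_i^j x̂_i = P̂_ℓ^j x̂_ℓ holds for x̂_i ∈ ℝ^{n_i^Γ} and x̂_ℓ ∈ ℝ^{n_ℓ^Γ}, then P_i^j g_i^Γ(x̂_i)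 = P_ℓ^j g_ℓ^Γ(x̂_ℓ). -/
/-!
Since the port selection matrices satisfy `P j * (P k)ᵀ = δ_jk`, sampling port `k` of the
assembled interface decoder returns exactly `g_k^p (P̂ k x̂)`. For the shared port both
subdomains therefore evaluate the same `g_j^p`, at arguments made equal by ROM compatibility.
-/

open Matrix

namespace Matrix

variable {R J : Type*} [Semiring R] {m p : J → Type*} {n q : Type*}
  [∀ j, Fintype (m j)] [∀ j, DecidableEq (m j)] [Fintype n] [Fintype q]

theorem mulVec_sum_transpose_mulVec (Q : Finset J) (P : ∀ j, Matrix (m j) n R)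
    (hP1 : ∀ j ∈ Q, P j * (P j)ᵀ = 1)
    (hP0 : ∀ j ∈ Q, ∀ k ∈ Q, j ≠ k → P j * (P k)ᵀ = 0)
    (v : ∀ j, m j → R) {k : J} (hk : k ∈ Q) :
    P k *ᵥ ∑ j ∈ Q, (P j)ᵀ *ᵥ v j = v k := by
  rw [mulVec_sum, Finset.sum_eq_single_of_mem k hk]
  · rw [mulVec_mulVec, hP1 k hk, one_mulVec]
  · intro j hj hjk
    rw [mulVec_mulVec, hP0 k hk j hj (Ne.symm hjk), zero_mulVec]

def interfaceDecoder (Q : Finset J) (P : ∀ j, Matrix (m j) n R) (Phat : ∀ j, Matrix (p j) q R)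
    (gp : ∀ j, (p j → R) → (m j → R)) (x : q → R) : n → R :=
  ∑ j ∈ Q, (P j)ᵀ *ᵥ gp j (Phat j *ᵥ x)

theorem mulVec_interfaceDecoder (Q : Finset J) (P : ∀ j, Matrix (m j) n R)
    (hP1 : ∀ j ∈ Q, P j * (P j)ᵀ = 1)
    (hP0 : ∀ j ∈ Q, ∀ k ∈ Q, j ≠ k → P j * (P k)ᵀ = 0)
    (Phat : ∀ j, Matrix (p j) q R) (gp : ∀ j, (p j → R) → (m j → R)) (x : q → R)
    {k : J} (hk : k ∈ Q) :
    P k *ᵥ interfaceDecoder Q P Phat gp x = gp k (Phat k *ᵥ x) :=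
  mulVec_sum_transpose_mulVec Q P hP1 hP0 _ hk

end Matrix

theorem stmt_5_general (J : Type*) (Np np : J → ℕ)
    (gp : ∀ j : J, (Fin (np j) → ℝ) → (Fin (Np j) → ℝ))
    (NΓi NΓl nΓi nΓl : ℕ)
    (Qi Ql : Finset J) (j₀ : J) (hj₀i : j₀ ∈ Qi) (hj₀l : j₀ ∈ Ql)
    (Pi : ∀ j : J, Matrix (Fin (Np j)) (Fin NΓi) ℝ)
    (Pl : ∀ j : J, Matrix (Fin (Np j)) (Fin NΓl) ℝ)
    (Phati : ∀ j : J, Matrix (Fin (np j)) (Fin nΓi) ℝ)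
    (Phatl : ∀ j : J, Matrix (Fin (np j)) (Fin nΓl) ℝ)
    (hPii : ∀ j ∈ Qi, Pi j * (Pi j)ᵀ = 1)
    (hPio : ∀ j ∈ Qi, ∀ k ∈ Qi, j ≠ k → Pi j * (Pi k)ᵀ = 0)
    (hPll : ∀ j ∈ Ql, Pl j * (Pl j)ᵀ = 1)
    (hPlo : ∀ j ∈ Ql, ∀ k ∈ Ql, j ≠ k → Pl j * (Pl k)ᵀ = 0)
    (gΓi : (Fin nΓi → ℝ) → (Fin NΓi → ℝ))
    (hgΓi : gΓi = fun x => ∑ j ∈ Qi, (Pi j)ᵀ.mulVec (gp j ((Phati j).mulVec x)))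
    (gΓl : (Fin nΓl → ℝ) → (Fin NΓl → ℝ))
    (hgΓl : gΓl = fun x => ∑ j ∈ Ql, (Pl j)ᵀ.mulVec (gp j ((Phatl j).mulVec x))) :
    (∀ x : Fin nΓi → ℝ, ∀ k ∈ Qi,
      (Pi k).mulVec (gΓi x) = gp k ((Phati k).mulVec x)) ∧
    (∀ (xi : Fin nΓi → ℝ) (xl : Fin nΓl → ℝ),
      (Phati j₀).mulVec xi = (Phatl j₀).mulVec xl →
      (Pi j₀).mulVec (gΓi xi) = (Pl j₀).mulVec (gΓl xl)) := by
  have hgi : gΓi = interfaceDecoder Qi Pi Phati gp := hgΓi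
  have hgl : gΓl = interfaceDecoder Ql Pl Phatl gp := hgΓl
  subst hgi hgl
  refine ⟨fun x k hk => mulVec_interfaceDecoder Qi Pi hPii hPio Phati gp x hk, ?_⟩
  intro xi xl hcompat
  rw [mulVec_interfaceDecoder Qi Pi hPii hPio Phati gp xi hj₀i,
    mulVec_interfaceDecoder Ql Pl hPll hPlo Phatl gp xl hj₀l, hcompat]

/-- Port decoders and the implied interface decoders: ROM port compatibility
implies strong compatibility on the FOM ports (Section 3.2 of the paper). -/
theorem stmt_5 (J : Type*) [DecidableEq J] (Np np : J → ℕ)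
    (gp : ∀ j : J, (Fin (np j) → ℝ) → (Fin (Np j) → ℝ))
    (NΓi NΓl nΓi nΓl : ℕ)
    (Qi Ql : Finset J) (j₀ : J) (hj₀i : j₀ ∈ Qi) (hj₀l : j₀ ∈ Ql)
    (Pi : ∀ j : J, Matrix (Fin (Np j)) (Fin NΓi) ℝ)
    (Pl : ∀ j : J, Matrix (Fin (Np j)) (Fin NΓl) ℝ)
    (Phati : ∀ j : J, Matrix (Fin (np j)) (Fin nΓi) ℝ)
    (Phatl : ∀ j : J, Matrix (Fin (np j)) (Fin nΓl) ℝ)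
    (hPii : ∀ j ∈ Qi, Pi j * (Pi j)ᵀ = 1)
    (hPio : ∀ j ∈ Qi, ∀ k ∈ Qi, j ≠ k → Pi j * (Pi k)ᵀ = 0)
    (hPll : ∀ j ∈ Ql, Pl j * (Pl j)ᵀ = 1)
    (hPlo : ∀ j ∈ Ql, ∀ k ∈ Ql, j ≠ k → Pl j * (Pl k)ᵀ = 0)
    (gΓi : (Fin nΓi → ℝ) → (Fin NΓi → ℝ))
    (hgΓi : gΓi = fun x => ∑ j ∈ Qi, (Pi j)ᵀ.mulVec (gp j ((Phati j).mulVec x)))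
    (gΓl : (Fin nΓl → ℝ) → (Fin NΓl → ℝ))
    (hgΓl : gΓl = fun x => ∑ j ∈ Ql, (Pl j)ᵀ.mulVec (gp j ((Phatl j).mulVec x))) :
    (∀ x : Fin nΓi → ℝ, ∀ k ∈ Qi,
      (Pi k).mulVec (gΓi x) = gp k ((Phati k).mulVec x)) ∧
    (∀ (xi : Fin nΓi → ℝ) (xl : Fin nΓl → ℝ),
      (Phati j₀).mulVec xi = (Phatl j₀).mulVec xl →
      (Pi j₀).mulVec (gΓi xi) = (Pl j₀).mulVec (gΓl xl)) :=
  stmt_5_general J Np np gp NΓi NΓl nΓi nΓl Qi Ql j₀ hj₀i hj₀l Pi Pl Phati Phatl hPii hPio hPll hPlo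
    gΓi hgΓi gΓl hgΓl
end

section
/- Let F : ℝ^n → ℝ^n be continuously differentiable, let z̄ ∈ ℝ^n satisfy F(z̄) = 0 with DF(z̄) invertible, and assume the Jacobian is Lipschitz continuous with constant K > 0: ‖DF(y) − DF(z)‖ ≤ K ‖y − z‖ for all y, z (operator norm). Set κ̄ = ‖DF(z̄)⁻¹‖ · ‖DF(z̄)‖. Let (η_k) be a sequence with 0 < η_k ≤ η for all k, where 4 η κ̄ < 1, and let σ ∈ (4 η κ̄, 1). Then there exists ε > 0 such that for every sequence (z_k) with ‖z_0 − z̄‖ < ε and z_{k+1} = z_k + s_k, where each step s_k satisfies the inexact Newton condition ‖F(z_k) + DF(z_k) s_k‖ ≤ η_k ‖F(z_k)‖, the sequence (z_k) converges to z̄ and satisfies, for every k, ‖z_{k+1} − z̄‖ ≤ K ‖DF(z̄)⁻¹‖ ‖z_k − z̄‖² + 4 η_k κ̄ ‖z_k − z̄‖ ≤ σ ‖z_k − z̄‖. -/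
/-!
With `e = z - zbar` and `e' = z + s - zbar`, Taylor's bound for a `K`-Lipschitz Jacobian gives
`‖F z‖ ≤ 2 ‖DF zbar‖ ‖e‖` and `‖DF z e'‖ ≤ η ‖F z‖ + K/2 ‖e‖²`. Replacing `DF z` by `DF zbar`
costs `K ‖e‖ ‖e'‖`, which is absorbed once `‖DF zbar⁻¹‖ K ‖e‖ ≤ 1/2`; this yields
`‖e'‖ ≤ K ‖DF zbar⁻¹‖ ‖e‖² + 4 η κ ‖e‖`. If moreover `‖DF zbar⁻¹‖ K ‖e‖ ≤ σ - 4 ηb κ`, the bound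
is at most `σ ‖e‖`, so the iterates stay in the ball and converge geometrically.
-/

open Filter Topology Set

theorem forall_lt_of_le_mul_of_lt {u : ℕ → ℝ} {ε σ : ℝ} (hσ : σ ≤ 1) (hu : ∀ k, 0 ≤ u k)
    (h0 : u 0 < ε) (h : ∀ k, u k < ε → u (k + 1) ≤ σ * u k) (k : ℕ) : u k < ε := by
  induction k with
  | zero => exact h0
  | succ k ih => nlinarith [h k ih, hu k]

theorem tendsto_zero_of_le_mul {u : ℕ → ℝ} {σ : ℝ} (hσ0 : 0 ≤ σ) (hσ1 : σ < 1)
    (hu : ∀ k, 0 ≤ u k) (h : ∀ k, u (k + 1) ≤ σ * u k) : Tendsto u atTop (𝓝 0) := by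
  refine squeeze_zero hu (fun k => le_geom hσ0 k fun i _ => h i) ?_
  simpa using (tendsto_pow_atTop_nhds_zero_of_lt_one hσ0 hσ1).mul_const (u 0)

section InexactNewton

variable {E : Type*} [NormedAddCommGroup E] [NormedSpace ℝ E] {F : E → E} {K : ℝ}

theorem norm_sub_sub_fderiv_apply_le_of_lipschitz_fderiv (hF : Differentiable ℝ F)
    (hLip : ∀ y z : E, ‖fderiv ℝ F y - fderiv ℝ F z‖ ≤ K * ‖y - z‖) (x y : E) :
    ‖F y - F x - fderiv ℝ F x (y - x)‖ ≤ K / 2 * ‖y - x‖ ^ 2 := by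
  set v := y - x
  set g : ℝ → E := fun t => F (x + t • v) - F x - t • fderiv ℝ F x v
  have hg : ∀ t : ℝ, HasDerivAt g (fderiv ℝ F (x + t • v) v - fderiv ℝ F x v) t := by
    intro t
    have hline : HasDerivAt (fun t : ℝ => x + t • v) v t := by
      simpa using ((hasDerivAt_id t).smul_const v).const_add x
    have hlin : HasDerivAt (fun t : ℝ => t • fderiv ℝ F x v) (fderiv ℝ F x v) t := by
      simpa using (hasDerivAt_id t).smul_const (fderiv ℝ F x v)
    exact (((hF _).hasFDerivAt.comp_hasDerivAt t hline).sub_const (F x)).sub hlin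
  have hbound : ∀ t : ℝ, HasDerivAt (fun t => K * ‖v‖ ^ 2 * (t ^ 2 / 2)) (K * ‖v‖ ^ 2 * t) t :=
    fun t => by simpa using ((hasDerivAt_pow 2 t).div_const 2).const_mul (K * ‖v‖ ^ 2)
  have hg' : ∀ t ∈ Ico (0 : ℝ) 1,
      ‖fderiv ℝ F (x + t • v) v - fderiv ℝ F x v‖ ≤ K * ‖v‖ ^ 2 * t := by
    intro t ht
    calc ‖fderiv ℝ F (x + t • v) v - fderiv ℝ F x v‖
        ≤ ‖fderiv ℝ F (x + t • v) - fderiv ℝ F x‖ * ‖v‖ :=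
          (fderiv ℝ F (x + t • v) - fderiv ℝ F x).le_opNorm v
      _ ≤ K * (t * ‖v‖) * ‖v‖ := by
          gcongr
          simpa [norm_smul, abs_of_nonneg ht.1] using hLip (x + t • v) x
      _ = K * ‖v‖ ^ 2 * t := by ring
  have h1 := image_norm_le_of_norm_deriv_right_le_deriv_boundary
    (fun t _ => (hg t).continuousAt.continuousWithinAt) (fun t _ => (hg t).hasDerivWithinAt)
    (by simp [g]) hbound hg' (right_mem_Icc.2 zero_le_one)
  simp only [g, v, one_smul, one_pow, add_sub_cancel] at h1
  linarith

theorem norm_add_sub_le_of_inexact_newton_step (hF : Differentiable ℝ F)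
    (hLip : ∀ y z : E, ‖fderiv ℝ F y - fderiv ℝ F z‖ ≤ K * ‖y - z‖) (hK : 0 ≤ K)
    {zbar : E} (hzbar : F zbar = 0) (A : E ≃L[ℝ] E) (hA : (A : E →L[ℝ] E) = fderiv ℝ F zbar)
    {η : ℝ} (hη : 0 ≤ η) {z s : E} (hs : ‖F z + fderiv ℝ F z s‖ ≤ η * ‖F z‖)
    (hz : ‖(A.symm : E →L[ℝ] E)‖ * K * ‖z - zbar‖ ≤ 1 / 2) :
    ‖z + s - zbar‖ ≤ K * ‖(A.symm : E →L[ℝ] E)‖ * ‖z - zbar‖ ^ 2 +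
      4 * η * (‖(A.symm : E →L[ℝ] E)‖ * ‖(A : E →L[ℝ] E)‖) * ‖z - zbar‖ := by
  have hT := norm_sub_sub_fderiv_apply_le_of_lipschitz_fderiv hF hLip
  set β := ‖(A.symm : E →L[ℝ] E)‖
  set a := ‖(A : E →L[ℝ] E)‖
  set e := z - zbar
  set e' := z + s - zbar
  have hinv : ∀ v, ‖v‖ ≤ β * ‖A v‖ := fun v => by
    simpa using (A.symm : E →L[ℝ] E).le_opNorm (A v)
  have hAe : ‖A e‖ ≤ a * ‖e‖ := (A : E →L[ℝ] E).le_opNorm e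
  -- `‖e‖ ≤ β a ‖e‖`, so the smallness of `β K ‖e‖` also controls `K ‖e‖`
  have hKe : K * ‖e‖ ≤ a / 2 := by
    have : ‖e‖ ≤ β * a * ‖e‖ := by
      rw [mul_assoc]; exact (hinv e).trans (mul_le_mul_of_nonneg_left hAe (norm_nonneg _))
    nlinarith [norm_nonneg (A : E →L[ℝ] E)]
  have hFz : ‖F z‖ ≤ 2 * a * ‖e‖ := by
    have h : ‖F z - A e‖ ≤ K / 2 * ‖e‖ ^ 2 := by
      have h := hT zbar z
      rwa [hzbar, sub_zero, ← hA] at h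
    nlinarith [norm_le_insert' (F z) (A e),
      mul_le_mul_of_nonneg_right hKe (norm_nonneg e), norm_nonneg e, norm_nonneg (A : E →L[ℝ] E)]
  have hDe' : ‖fderiv ℝ F z e'‖ ≤ η * ‖F z‖ + K / 2 * ‖e‖ ^ 2 := by
    have h : ‖0 - F z - fderiv ℝ F z (zbar - z)‖ ≤ K / 2 * ‖e‖ ^ 2 := by
      simpa only [hzbar, norm_sub_rev zbar z] using hT z zbar
    have hsplit : fderiv ℝ F z e' =
        (F z + fderiv ℝ F z s) + (0 - F z - fderiv ℝ F z (zbar - z)) := by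
      simp only [e', map_sub, map_add]; abel
    rw [hsplit]
    exact (norm_add_le _ _).trans (add_le_add hs h)
  have hAe' : ‖A e'‖ ≤ ‖fderiv ℝ F z e'‖ + K * ‖e‖ * ‖e'‖ := by
    have hsplit : A e' = fderiv ℝ F z e' + (fderiv ℝ F zbar - fderiv ℝ F z) e' := by
      rw [← hA]; simp
    rw [hsplit]
    refine (norm_add_le _ _).trans (add_le_add_right ?_ _)
    refine ((fderiv ℝ F zbar - fderiv ℝ F z).le_opNorm e').trans ?_
    gcongr
    simpa [norm_sub_rev zbar z] using hLip zbar z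
  have he' : ‖e'‖ ≤ β * (η * ‖F z‖ + K / 2 * ‖e‖ ^ 2) + β * K * ‖e‖ * ‖e'‖ := by
    have hβ : 0 ≤ β := norm_nonneg _
    nlinarith [hinv e']
  -- `β K ‖e‖ ‖e'‖ ≤ ‖e'‖ / 2` is absorbed into the left-hand side
  nlinarith [mul_le_mul_of_nonneg_right hz (norm_nonneg e'),
    mul_le_mul_of_nonneg_left hFz (mul_nonneg (norm_nonneg (A.symm : E →L[ℝ] E)) hη)]

end InexactNewton

theorem stmt_8_general (n : ℕ)
    (F : EuclideanSpace ℝ (Fin n) → EuclideanSpace ℝ (Fin n))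
    (hF : ContDiff ℝ 1 F)
    (zbar : EuclideanSpace ℝ (Fin n)) (hzbar : F zbar = 0)
    (A : EuclideanSpace ℝ (Fin n) ≃L[ℝ] EuclideanSpace ℝ (Fin n))
    (hA : (A : EuclideanSpace ℝ (Fin n) →L[ℝ] EuclideanSpace ℝ (Fin n)) = fderiv ℝ F zbar)
    (K : ℝ) (hK : 0 < K)
    (hLip : ∀ y z : EuclideanSpace ℝ (Fin n),
      ‖fderiv ℝ F y - fderiv ℝ F z‖ ≤ K * ‖y - z‖)
    (κ : ℝ)
    (hκ : κ = ‖(A.symm : EuclideanSpace ℝ (Fin n) →L[ℝ] EuclideanSpace ℝ (Fin n))‖ *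
      ‖fderiv ℝ F zbar‖)
    (η : ℕ → ℝ) (ηb : ℝ) (hη : ∀ k, 0 < η k ∧ η k ≤ ηb)
    (σ : ℝ) (hσ : σ ∈ Set.Ioo (4 * ηb * κ) 1) :
    ∃ ε > 0, ∀ z s : ℕ → EuclideanSpace ℝ (Fin n),
      ‖z 0 - zbar‖ < ε →
      (∀ k, z (k + 1) = z k + s k) →
      (∀ k, ‖F (z k) + fderiv ℝ F (z k) (s k)‖ ≤ η k * ‖F (z k)‖) →
      Tendsto z atTop (𝓝 zbar) ∧
      ∀ k,
        ‖z (k + 1) - zbar‖ ≤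
          K * ‖(A.symm : EuclideanSpace ℝ (Fin n) →L[ℝ] EuclideanSpace ℝ (Fin n))‖ *
              ‖z k - zbar‖ ^ 2 + 4 * η k * κ * ‖z k - zbar‖ ∧
        K * ‖(A.symm : EuclideanSpace ℝ (Fin n) →L[ℝ] EuclideanSpace ℝ (Fin n))‖ *
              ‖z k - zbar‖ ^ 2 + 4 * η k * κ * ‖z k - zbar‖ ≤ σ * ‖z k - zbar‖ := by
  set β := ‖(A.symm : EuclideanSpace ℝ (Fin n) →L[ℝ] EuclideanSpace ℝ (Fin n))‖
  have hβ : 0 ≤ β := norm_nonneg _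
  have hκ0 : 0 ≤ κ := hκ ▸ mul_nonneg hβ (norm_nonneg _)
  have hσ0 : 0 ≤ σ := le_trans (by nlinarith [hη 0]) hσ.1.le
  obtain ⟨ε, hε0, hε⟩ := exists_pos_mul_lt (lt_min one_half_pos (sub_pos.2 hσ.1)) (β * K)
  refine ⟨ε, hε0, fun z s h0 hz hs => ?_⟩
  have hstep : ∀ k, ‖z k - zbar‖ < ε →
      ‖z (k + 1) - zbar‖ ≤ K * β * ‖z k - zbar‖ ^ 2 + 4 * η k * κ * ‖z k - zbar‖ ∧
      K * β * ‖z k - zbar‖ ^ 2 + 4 * η k * κ * ‖z k - zbar‖ ≤ σ * ‖z k - zbar‖ := by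
    intro k hk
    have hr : 0 ≤ ‖z k - zbar‖ := norm_nonneg _
    have hsmall : β * K * ‖z k - zbar‖ ≤ min (1 / 2) (σ - 4 * ηb * κ) :=
      le_trans (mul_le_mul_of_nonneg_left hk.le (mul_nonneg hβ hK.le)) hε.le
    constructor
    · rw [hz k, hκ, ← hA]
      exact norm_add_sub_le_of_inexact_newton_step (hF.differentiable one_ne_zero) hLip hK.le
        hzbar A hA (hη k).1.le (hs k) (hsmall.trans (min_le_left _ _))
    · nlinarith [mul_le_mul_of_nonneg_right (hsmall.trans (min_le_right _ _)) hr,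
        mul_le_mul_of_nonneg_right (hη k).2 (mul_nonneg hκ0 hr)]
  have hball : ∀ k, ‖z k - zbar‖ < ε :=
    forall_lt_of_le_mul_of_lt hσ.2.le (fun _ => norm_nonneg _) h0
      fun k hk => (hstep k hk).1.trans (hstep k hk).2
  refine ⟨tendsto_iff_norm_sub_tendsto_zero.2 ?_, fun k => hstep k (hball k)⟩
  exact tendsto_zero_of_le_mul hσ0 hσ.2 (fun _ => norm_nonneg _)
    fun k => (hstep k (hball k)).1.trans (hstep k (hball k)).2

/-- Local convergence of the inexact Newton method applied to the KKT system
(Theorem 4.3 of the paper). -/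
theorem stmt_8 (n : ℕ)
    (F : EuclideanSpace ℝ (Fin n) → EuclideanSpace ℝ (Fin n))
    (hF : ContDiff ℝ 1 F)
    (zbar : EuclideanSpace ℝ (Fin n)) (hzbar : F zbar = 0)
    (A : EuclideanSpace ℝ (Fin n) ≃L[ℝ] EuclideanSpace ℝ (Fin n))
    (hA : (A : EuclideanSpace ℝ (Fin n) →L[ℝ] EuclideanSpace ℝ (Fin n)) = fderiv ℝ F zbar)
    (K : ℝ) (hK : 0 < K)
    (hLip : ∀ y z : EuclideanSpace ℝ (Fin n),
      ‖fderiv ℝ F y - fderiv ℝ F z‖ ≤ K * ‖y - z‖)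
    (κ : ℝ)
    (hκ : κ = ‖(A.symm : EuclideanSpace ℝ (Fin n) →L[ℝ] EuclideanSpace ℝ (Fin n))‖ *
      ‖fderiv ℝ F zbar‖)
    (η : ℕ → ℝ) (ηb : ℝ) (hη : ∀ k, 0 < η k ∧ η k ≤ ηb)
    (hηb : 4 * ηb * κ < 1)
    (σ : ℝ) (hσ : σ ∈ Set.Ioo (4 * ηb * κ) 1) :
    ∃ ε > 0, ∀ z s : ℕ → EuclideanSpace ℝ (Fin n),
      ‖z 0 - zbar‖ < ε →
      (∀ k, z (k + 1) = z k + s k) →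
      (∀ k, ‖F (z k) + fderiv ℝ F (z k) (s k)‖ ≤ η k * ‖F (z k)‖) →
      Tendsto z atTop (𝓝 zbar) ∧
      ∀ k,
        ‖z (k + 1) - zbar‖ ≤
          K * ‖(A.symm : EuclideanSpace ℝ (Fin n) →L[ℝ] EuclideanSpace ℝ (Fin n))‖ *
              ‖z k - zbar‖ ^ 2 + 4 * η k * κ * ‖z k - zbar‖ ∧
        K * ‖(A.symm : EuclideanSpace ℝ (Fin n) →L[ℝ] EuclideanSpace ℝ (Fin n))‖ *
              ‖z k - zbar‖ ^ 2 + 4 * η k * κ * ‖z k - zbar‖ ≤ σ * ‖z k - zbar‖ :=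
  stmt_8_general n F hF zbar hzbar A hA K hK hLip κ hκ η ηb hη σ hσ
end

section
/- For i = 1, …, nΩ let r_i : ℝ^{N_i} → ℝ^{N_i^r} be functions, B_i ∈ ℝ^{N_i^B × N_i^r} matrices, and g_i : ℝ^{n_i} → ℝ^{N_i} maps. Equip the product space Π_i ℝ^{N_i} with the norm ‖y‖ = (Σ_i ‖y_i‖₂²)^{1/2}, let S ⊆ Π_i ℝ^{n_i} be a set, and write g(ŵ) = (g_1(ŵ_1), …, g_{nΩ}(ŵ_{nΩ})). Let x* = (x*_1, …, x*_{nΩ}) satisfy r_i(x*_i) = 0 for all i, and let x̂* ∈ S. Assume: (a) there exists κ_ℓ > 0 such that (Σ_i ‖r_i(y_i) − r_i(z_i)‖₂²)^{1/2} ≥ κ_ℓ ‖y − z‖ for all y, z ∈ Π_i ℝ^{N_i}; and (b) there exists P > 0 such that (Σ_i ‖B_i r_i(y_i)‖₂²)^{1/2} ≥ P (Σ_i ‖r_i(y_i)‖₂²)^{1/2} for all y ∈ g(S). Then ‖x* − g(x̂*)‖ ≤ (1/(P κ_ℓ)) · (Σ_i ‖B_i r_i(g_i(x̂*_i))‖₂²)^{1/2}.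 -/
-- `e` is the state error, `ρ` the full residual and `β` the hyper-reduced residual.
theorem le_one_div_mul_of_mul_le_of_mul_le {e ρ β P κ : ℝ} (hP : 0 < P) (hκ : 0 < κ)
    (hlip : κ * e ≤ ρ) (hhyper : P * ρ ≤ β) : e ≤ 1 / (P * κ) * β := by
  rw [one_div_mul_eq_div, le_div_iff₀ (mul_pos hP hκ)]
  calc e * (P * κ) = P * (κ * e) := by ring
    _ ≤ P * ρ := mul_le_mul_of_nonneg_left hlip hP.le
    _ ≤ β := hhyper

/-- A posteriori error bound for the DD-LSPG-ROM (Theorem 6.1 of the paper). -/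
theorem stmt_9 (nΩ : ℕ) (N Nr NB nred : Fin nΩ → ℕ)
    (r : ∀ i : Fin nΩ, (Fin (N i) → ℝ) → (Fin (Nr i) → ℝ))
    (B : ∀ i : Fin nΩ, Matrix (Fin (NB i)) (Fin (Nr i)) ℝ)
    (g : ∀ i : Fin nΩ, (Fin (nred i) → ℝ) → (Fin (N i) → ℝ))
    (S : Set (∀ i : Fin nΩ, Fin (nred i) → ℝ))
    (xstar : ∀ i : Fin nΩ, Fin (N i) → ℝ)
    (hxstar : ∀ i, r i (xstar i) = 0)
    (xhat : ∀ i : Fin nΩ, Fin (nred i) → ℝ) (hxhat : xhat ∈ S)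
    (κℓ : ℝ) (hκℓ : 0 < κℓ)
    (ha : ∀ y z : ∀ i : Fin nΩ, Fin (N i) → ℝ,
      Real.sqrt (∑ i, ∑ j, (r i (y i) j - r i (z i) j) ^ 2) ≥
        κℓ * Real.sqrt (∑ i, ∑ j, (y i j - z i j) ^ 2))
    (P : ℝ) (hP : 0 < P)
    (hb : ∀ w ∈ S,
      Real.sqrt (∑ i, ∑ j, ((B i).mulVec (r i (g i (w i))) j) ^ 2) ≥
        P * Real.sqrt (∑ i, ∑ j, (r i (g i (w i)) j) ^ 2)) :
    Real.sqrt (∑ i, ∑ j, (xstar i j - g i (xhat i) j) ^ 2) ≤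
      (1 / (P * κℓ)) *
        Real.sqrt (∑ i, ∑ j, ((B i).mulVec (r i (g i (xhat i))) j) ^ 2) := by
  have hlip : κℓ * Real.sqrt (∑ i, ∑ j, (xstar i j - g i (xhat i) j) ^ 2) ≤
      Real.sqrt (∑ i, ∑ j, (r i (g i (xhat i)) j) ^ 2) := by
    simpa only [hxstar, Pi.zero_apply, zero_sub, neg_sq] using ha xstar (fun i => g i (xhat i))
  exact le_one_div_mul_of_mul_le_of_mul_le hP hκℓ hlip (hb xhat hxhat)
end

section
/- For i = 1, …, nΩ let r_i : ℝ^{N_i} → ℝ^{N_i^r} be functions, B_i ∈ ℝ^{N_i^B × N_i^r} matrices, and g_i : ℝ^{n_i} → ℝ^{N_i} maps. Equip the product space Π_i ℝ^{N_i} with the norm ‖y‖ = (Σ_i ‖y_i‖₂²)^{1/2}, let S ⊆ Π_i ℝ^{n_i} be a set, and write g(ŵ) = (g_1(ŵ_1), …, g_{nΩ}(ŵ_{nΩ})). Let x* satisfy r_i(x*_i) = 0 for all i, and let x̂* ∈ S be a global minimizer of J(ŵ) = Σ_i ‖B_i r_i(g_i(ŵ_i))‖₂² over S. Assume: (a) there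 exists κ_ℓ > 0 such that (Σ_i ‖r_i(y_i) − r_i(z_i)‖₂²)^{1/2} ≥ κ_ℓ ‖y − z‖ for all y, z; (b) there exists P > 0 such that (Σ_i ‖B_i r_i(y_i)‖₂²)^{1/2} ≥ P (Σ_i ‖r_i(y_i)‖₂²)^{1/2} for all y ∈ g(S); and (c) there exists κ_u > 0 such that (Σ_i ‖B_i r_i(y_i) − B_i r_i(z_i)‖₂²)^{1/2} ≤ κ_u ‖y − z‖ for all y, z. Then for every ŵ ∈ S, ‖x* − g(x̂*)‖ ≤ (κ_u/(P κ_ℓ)) ‖x* − g(ŵ)‖; equivalently, ‖x* − g(x̂*)‖ ≤ (κ_u/(P κ_ℓ)) inf_{ŵ ∈ S} ‖x* − g(ŵ)‖. -/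
/-!
Chain the hypotheses through the residuals, with everything measured in the block ℓ² norm:
κℓ ‖x* − g(x̂*)‖ ≤ ‖r(g(x̂*))‖ by (a), since r(x*) = 0; P ‖r(g(x̂*))‖ ≤ ‖B r(g(x̂*))‖ by (b);
‖B r(g(x̂*))‖ ≤ ‖B r(g(ŵ))‖ by minimality; and ‖B r(g(ŵ))‖ ≤ κu ‖x* − g(ŵ)‖ by (c), since B r(x*) = 0.
-/

open Matrix

section Quasioptimality

variable {E F G : Type*} [SeminormedAddGroup E] [SeminormedAddGroup F] [SeminormedAddGroup G]

theorem norm_sub_le_of_residual_le {r : E → F} {Br : E → G} {κℓ P κu : ℝ} {xstar y v : E}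
    (hr : r xstar = 0) (hBr : Br xstar = 0) (hκℓ : 0 < κℓ) (hP : 0 < P)
    (hlower : ∀ y z, κℓ * ‖y - z‖ ≤ ‖r y - r z‖)
    (hupper : ∀ y z, ‖Br y - Br z‖ ≤ κu * ‖y - z‖)
    (hstab : P * ‖r y‖ ≤ ‖Br y‖) (hmin : ‖Br y‖ ≤ ‖Br v‖) :
    ‖xstar - y‖ ≤ κu / (P * κℓ) * ‖xstar - v‖ := by
  have hres : κℓ * ‖xstar - y‖ ≤ ‖r y‖ := by
    simpa [hr, norm_sub_rev (r y)] using hlower xstar y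
  have hBres : ‖Br v‖ ≤ κu * ‖xstar - v‖ := by
    simpa [hBr, norm_sub_rev v] using hupper v xstar
  rw [div_mul_eq_mul_div, le_div_iff₀ (mul_pos hP hκℓ)]
  calc ‖xstar - y‖ * (P * κℓ) = P * (κℓ * ‖xstar - y‖) := by ring
    _ ≤ P * ‖r y‖ := by gcongr
    _ ≤ κu * ‖xstar - v‖ := hstab.trans (hmin.trans hBres)

end Quasioptimality

section BlockL2

variable {ι : Type*} {n : ι → ℕ}

abbrev BlockL2 (n : ι → ℕ) := PiLp 2 fun i => EuclideanSpace ℝ (Fin (n i))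

def BlockL2.ofBlocks (y : ∀ i, Fin (n i) → ℝ) : BlockL2 n :=
  WithLp.toLp 2 fun i => WithLp.toLp 2 (y i)

def BlockL2.toBlocks (y : BlockL2 n) : ∀ i, Fin (n i) → ℝ := fun i => (y i).ofLp

theorem BlockL2.ofBlocks_sub (y z : ∀ i, Fin (n i) → ℝ) :
    ofBlocks (y - z) = ofBlocks y - ofBlocks z := rfl

variable [Fintype ι]

theorem BlockL2.norm_ofBlocks (y : ∀ i, Fin (n i) → ℝ) :
    ‖ofBlocks y‖ = √(∑ i, ∑ j, y i j ^ 2) := by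
  rw [PiLp.norm_eq_of_L2]
  congr 1
  refine Finset.sum_congr rfl fun i _ => ?_
  simp [ofBlocks, EuclideanSpace.real_norm_sq_eq]

theorem BlockL2.norm_ofBlocks_sub (y z : ∀ i, Fin (n i) → ℝ) :
    ‖ofBlocks y - ofBlocks z‖ = √(∑ i, ∑ j, (y i j - z i j) ^ 2) := by
  rw [← ofBlocks_sub, norm_ofBlocks]
  rfl

end BlockL2

open BlockL2 in
theorem stmt_10_general (nΩ : ℕ) (N Nr NB nred : Fin nΩ → ℕ)
    (r : ∀ i : Fin nΩ, (Fin (N i) → ℝ) → (Fin (Nr i) → ℝ))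
    (B : ∀ i : Fin nΩ, Matrix (Fin (NB i)) (Fin (Nr i)) ℝ)
    (g : ∀ i : Fin nΩ, (Fin (nred i) → ℝ) → (Fin (N i) → ℝ))
    (S : Set (∀ i : Fin nΩ, Fin (nred i) → ℝ))
    (xstar : ∀ i : Fin nΩ, Fin (N i) → ℝ)
    (hxstar : ∀ i, r i (xstar i) = 0)
    (xhat : ∀ i : Fin nΩ, Fin (nred i) → ℝ) (hxhat : xhat ∈ S)
    (hmin : ∀ w ∈ S,
      ∑ i, ∑ j, ((B i).mulVec (r i (g i (xhat i))) j) ^ 2 ≤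
        ∑ i, ∑ j, ((B i).mulVec (r i (g i (w i))) j) ^ 2)
    (κℓ : ℝ) (hκℓ : 0 < κℓ)
    (ha : ∀ y z : ∀ i : Fin nΩ, Fin (N i) → ℝ,
      Real.sqrt (∑ i, ∑ j, (r i (y i) j - r i (z i) j) ^ 2) ≥
        κℓ * Real.sqrt (∑ i, ∑ j, (y i j - z i j) ^ 2))
    (P : ℝ) (hP : 0 < P)
    (hb : ∀ w ∈ S,
      Real.sqrt (∑ i, ∑ j, ((B i).mulVec (r i (g i (w i))) j) ^ 2) ≥
        P * Real.sqrt (∑ i, ∑ j, (r i (g i (w i)) j) ^ 2))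
    (κu : ℝ)
    (hc : ∀ y z : ∀ i : Fin nΩ, Fin (N i) → ℝ,
      Real.sqrt (∑ i, ∑ j,
          ((B i).mulVec (r i (y i)) j - (B i).mulVec (r i (z i)) j) ^ 2) ≤
        κu * Real.sqrt (∑ i, ∑ j, (y i j - z i j) ^ 2)) :
    ∀ w ∈ S,
      Real.sqrt (∑ i, ∑ j, (xstar i j - g i (xhat i) j) ^ 2) ≤
        (κu / (P * κℓ)) *
          Real.sqrt (∑ i, ∑ j, (xstar i j - g i (w i) j) ^ 2) := by
  intro w hw
  let res (y : BlockL2 N) : BlockL2 Nr := ofBlocks fun i => r i (toBlocks y i)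
  let hyperRes (y : BlockL2 N) : BlockL2 NB := ofBlocks fun i => B i *ᵥ r i (toBlocks y i)
  have hlower : ∀ y z, κℓ * ‖y - z‖ ≤ ‖res y - res z‖ := fun y z => by
    have h := ha (toBlocks y) (toBlocks z)
    simp only [← norm_ofBlocks_sub] at h
    exact h
  have hupper : ∀ y z, ‖hyperRes y - hyperRes z‖ ≤ κu * ‖y - z‖ := fun y z => by
    have h := hc (toBlocks y) (toBlocks z)
    simp only [← norm_ofBlocks_sub] at h
    exact h
  rw [← norm_ofBlocks_sub, ← norm_ofBlocks_sub]
  refine norm_sub_le_of_residual_le (r := res) (Br := hyperRes) ?_ ?_ hκℓ hP hlower hupper ?_ ?_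
  · exact congrArg ofBlocks (funext hxstar)
  · exact congrArg ofBlocks <| funext fun i =>
      (congrArg (B i *ᵥ ·) (hxstar i)).trans (mulVec_zero _)
  · have h := hb xhat hxhat
    simp only [← norm_ofBlocks] at h
    exact h
  · have h := Real.sqrt_le_sqrt (hmin w hw)
    simp only [← norm_ofBlocks] at h
    exact h

/-- A priori error bound for the DD-LSPG-ROM (Theorem 6.2 of the paper). -/
theorem stmt_10 (nΩ : ℕ) (N Nr NB nred : Fin nΩ → ℕ)
    (r : ∀ i : Fin nΩ, (Fin (N i) → ℝ) → (Fin (Nr i) → ℝ))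
    (B : ∀ i : Fin nΩ, Matrix (Fin (NB i)) (Fin (Nr i)) ℝ)
    (g : ∀ i : Fin nΩ, (Fin (nred i) → ℝ) → (Fin (N i) → ℝ))
    (S : Set (∀ i : Fin nΩ, Fin (nred i) → ℝ))
    (xstar : ∀ i : Fin nΩ, Fin (N i) → ℝ)
    (hxstar : ∀ i, r i (xstar i) = 0)
    (xhat : ∀ i : Fin nΩ, Fin (nred i) → ℝ) (hxhat : xhat ∈ S)
    (hmin : ∀ w ∈ S,
      ∑ i, ∑ j, ((B i).mulVec (r i (g i (xhat i))) j) ^ 2 ≤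
        ∑ i, ∑ j, ((B i).mulVec (r i (g i (w i))) j) ^ 2)
    (κℓ : ℝ) (hκℓ : 0 < κℓ)
    (ha : ∀ y z : ∀ i : Fin nΩ, Fin (N i) → ℝ,
      Real.sqrt (∑ i, ∑ j, (r i (y i) j - r i (z i) j) ^ 2) ≥
        κℓ * Real.sqrt (∑ i, ∑ j, (y i j - z i j) ^ 2))
    (P : ℝ) (hP : 0 < P)
    (hb : ∀ w ∈ S,
      Real.sqrt (∑ i, ∑ j, ((B i).mulVec (r i (g i (w i))) j) ^ 2) ≥
        P * Real.sqrt (∑ i, ∑ j, (r i (g i (w i)) j) ^ 2))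
    (κu : ℝ) (hκu : 0 < κu)
    (hc : ∀ y z : ∀ i : Fin nΩ, Fin (N i) → ℝ,
      Real.sqrt (∑ i, ∑ j,
          ((B i).mulVec (r i (y i)) j - (B i).mulVec (r i (z i)) j) ^ 2) ≤
        κu * Real.sqrt (∑ i, ∑ j, (y i j - z i j) ^ 2)) :
    ∀ w ∈ S,
      Real.sqrt (∑ i, ∑ j, (xstar i j - g i (xhat i) j) ^ 2) ≤
        (κu / (P * κℓ)) *
          Real.sqrt (∑ i, ∑ j, (xstar i j - g i (w i) j) ^ 2) :=
  stmt_10_general nΩ N Nr NB nred r B g S xstar hxstar xhat hxhat hmin κℓ hκℓ ha P hP hb κu hc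
end
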